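/- Let γ(t) = (e^{at}, e^{bt}) with a, b nonzero and a ≠ b. Then c (γ₂'γ₁ − γ₁'γ₂)^{n+2} γ₁^{n−1} = (γ₂')^{n−1} (γ₁''γ₂' − γ₂''γ₁') holds for a constant c ≠ 0 if and only if b = −n a, in which case c = −a b^n / (b−a)^{n+1}. -/

import Mathlib

/-!
Along γ = (x, y) = (e^{at}, e^{bt}) one has γ₂'γ₁ − γ₁'γ₂ = (b − a) x y and
γ₁''γ₂' − γ₂''γ₁' = a b (a − b) x y, so after dividing by x yⁿ the condition reads
c (b − a)^{n+2} e^{2(na + b)t} = a bⁿ (a − b). A nonzero multiple of an exponential is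
constant only when the exponent vanishes, which forces b = −na and pins down c.
-/

open Real

lemma hasDerivAt_exp_const_mul (a t : ℝ) :
    HasDerivAt (fun t => exp (a * t)) (a * exp (a * t)) t := by
  simpa [mul_comm] using ((hasDerivAt_id t).const_mul a).exp

lemma deriv_exp_const_mul (a : ℝ) :
    deriv (fun t => exp (a * t)) = fun t => a * exp (a * t) :=
  funext fun t => (hasDerivAt_exp_const_mul a t).deriv

lemma deriv_deriv_exp_const_mul (a : ℝ) :
    deriv (deriv fun t => exp (a * t)) = fun t => a ^ 2 * exp (a * t) := by
  rw [deriv_exp_const_mul]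
  funext t
  rw [((hasDerivAt_exp_const_mul a t).const_mul a).deriv]
  ring

lemma affine_sphere_condition_exp_iff {n : ℕ} (hn : 1 ≤ n) (a b c t : ℝ) :
    c * (b * exp (b * t) * exp (a * t) - a * exp (a * t) * exp (b * t)) ^ (n + 2)
        * exp (a * t) ^ (n - 1)
      = (b * exp (b * t)) ^ (n - 1)
        * (a ^ 2 * exp (a * t) * (b * exp (b * t)) - b ^ 2 * exp (b * t) * (a * exp (a * t)))
    ↔ c * (b - a) ^ (n + 2) * exp (2 * (n * a + b) * t) = a * b ^ n * (a - b) := by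
  obtain ⟨m, rfl⟩ : ∃ m, n = m + 1 := ⟨n - 1, by omega⟩
  set x := exp (a * t)
  set y := exp (b * t)
  have hxy : x * y ^ (m + 1) ≠ 0 := by positivity
  have hexp : exp (2 * ((m + 1 : ℕ) * a + b) * t) = x ^ (2 * (m + 1)) * y ^ 2 := by
    rw [← exp_nat_mul, ← exp_nat_mul, ← exp_add]
    congr 1
    push_cast
    ring
  have hdiff : b * y * x - a * x * y = (b - a) * (x * y) := by ring
  rw [hdiff, mul_pow, mul_pow, hexp]
  conv_rhs => rw [← mul_left_inj' hxy]
  simp only [Nat.add_sub_cancel]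
  constructor <;> intro h <;> linear_combination h

lemma forall_mul_exp_eq_iff {K C k : ℝ} (hK : K ≠ 0) :
    (∀ t, K * exp (k * t) = C) ↔ k = 0 ∧ K = C := by
  constructor
  · intro h
    have hKC : K = C := by simpa using h 0
    refine ⟨?_, hKC⟩
    have h1 : K * exp k = K * 1 := by simpa [hKC] using h 1
    exact (exp_eq_one_iff k).1 (mul_left_cancel₀ hK h1)
  · rintro ⟨rfl, rfl⟩ t
    simp

lemma mul_sub_pow_eq_iff {n : ℕ} {a b c : ℝ} (hab : a ≠ b) :
    c * (b - a) ^ (n + 2) = a * b ^ n * (a - b) ↔ c = -a * b ^ n / (b - a) ^ (n + 1) := by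
  have hba : b - a ≠ 0 := sub_ne_zero.2 hab.symm
  rw [eq_div_iff (pow_ne_zero _ hba), pow_succ, ← mul_assoc]
  constructor
  · intro h
    exact mul_right_cancel₀ hba (by linear_combination h)
  · intro h
    linear_combination (b - a) * h

/-- For γ = (e^{at}, e^{bt}), the proper affine sphere condition
c (γ₂'γ₁ − γ₁'γ₂)^{n+2} γ₁^{n−1} = (γ₂')^{n−1}(γ₁''γ₂' − γ₂''γ₁') holds for some
constant c ≠ 0 iff b = −na, and then c = −a bⁿ/(b−a)^{n+1}. -/
theorem stmt8 (n : ℕ) (hn : 2 ≤ n) (a b : ℝ) (ha : a ≠ 0) (hb : b ≠ 0) (hab : a ≠ b)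
    (γ₁ γ₂ : ℝ → ℝ) (hγ₁ : γ₁ = fun t => Real.exp (a * t))
    (hγ₂ : γ₂ = fun t => Real.exp (b * t)) :
    ((∃ c : ℝ, c ≠ 0 ∧ ∀ t : ℝ,
      c * (deriv γ₂ t * γ₁ t - deriv γ₁ t * γ₂ t) ^ (n + 2) * (γ₁ t) ^ (n - 1)
        = (deriv γ₂ t) ^ (n - 1) *
          (deriv (deriv γ₁) t * deriv γ₂ t - deriv (deriv γ₂) t * deriv γ₁ t))
      ↔ b = -(n : ℝ) * a) ∧
    (∀ c : ℝ, c ≠ 0 →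
      (∀ t : ℝ,
        c * (deriv γ₂ t * γ₁ t - deriv γ₁ t * γ₂ t) ^ (n + 2) * (γ₁ t) ^ (n - 1)
          = (deriv γ₂ t) ^ (n - 1) *
            (deriv (deriv γ₁) t * deriv γ₂ t - deriv (deriv γ₂) t * deriv γ₁ t)) →
      c = -a * b ^ n / (b - a) ^ (n + 1)) := by
  subst hγ₁ hγ₂
  -- second derivatives first, before the inner `deriv` is rewritten away
  simp only [deriv_deriv_exp_const_mul]
  simp only [deriv_exp_const_mul, affine_sphere_condition_exp_iff (n := n) (by omega)]
  have hba : b - a ≠ 0 := sub_ne_zero.2 hab.symm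
  have hK : ∀ c : ℝ, c ≠ 0 → c * (b - a) ^ (n + 2) ≠ 0 := fun c hc =>
    mul_ne_zero hc (pow_ne_zero _ hba)
  refine ⟨⟨fun ⟨c, hc, h⟩ => ?_, fun h => ?_⟩, fun c hc h => ?_⟩
  · have hk := ((forall_mul_exp_eq_iff (hK c hc)).1 h).1
    linarith
  · have hc : -a * b ^ n / (b - a) ^ (n + 1) ≠ 0 :=
      div_ne_zero (mul_ne_zero (neg_ne_zero.2 ha) (pow_ne_zero _ hb)) (pow_ne_zero _ hba)
    refine ⟨_, hc, (forall_mul_exp_eq_iff (hK _ hc)).2 ⟨by rw [h]; ring, ?_⟩⟩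
    exact (mul_sub_pow_eq_iff hab).2 rfl
  · exact (mul_sub_pow_eq_iff hab).1 ((forall_mul_exp_eq_iff (hK c hc)).1 h).2
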